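/- Let R be a ring and let P be a bounded-above cochain complex of pure-projective R-modules. If P is pure-exact, then P is contractible, i.e., P is isomorphic to the zero object in the homotopy category K(R); equivalently, P is a direct sum of contractible complexes of the form ⋯→0→K→K→0→⋯ with the identity map in the middle. -/

import Mathlib

/-!
Common definitions: purity for modules and complexes over an arbitrary ring,
following Cohn's characterization of pure-exact sequences (a short exact sequence
of left `R`-modules is pure-exact iff every morphism from a finitely presented
module to the cokernel lifts, iff it stays exact after tensoring with any right
`R`-module).
-/

open CategoryTheory Limits Pretriangulated ZeroObject

universe u

namespace Paper

variable (R : Type u) [Ring R]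

/-- A surjective morphism of left `R`-modules is a *pure epimorphism* if (equivalently,
by Cohn's theorem, to the exactness of `N ⊗ -` applied to the associated short exact
sequence, for every right `R`-module `N`) every morphism from a finitely presented
module into the target factors through it. -/
def IsPureEpi {B C : ModuleCat.{u} R} (g : B ⟶ C) : Prop :=
  Function.Surjective g ∧
    ∀ (F : ModuleCat.{u} R), Module.FinitePresentation R F →
      ∀ (φ : F ⟶ C), ∃ ψ : F ⟶ B, ψ ≫ g = φ

/-- `0 → A → B → C → 0` (given by `f : A ⟶ B` and `g : B ⟶ C`) is a *pure-exact*
short exact sequence of left `R`-modules. -/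
def IsPureSES {A B C : ModuleCat.{u} R} (f : A ⟶ B) (g : B ⟶ C) : Prop :=
  Function.Injective f ∧ Function.Exact f g ∧ IsPureEpi R g

/-- A left `R`-module `P` is *pure-projective* if `Hom(P,-)` sends every pure-exact
short exact sequence to a short exact sequence (of abelian groups). -/
def PureProjective (P : ModuleCat.{u} R) : Prop :=
  ∀ ⦃A B C : ModuleCat.{u} R⦄ (f : A ⟶ B) (g : B ⟶ C), IsPureSES R f g →
    Function.Injective (fun (φ : P ⟶ A) => φ ≫ f) ∧
    Function.Exact (fun (φ : P ⟶ A) => φ ≫ f) (fun (φ : P ⟶ B) => φ ≫ g) ∧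
    Function.Surjective (fun (φ : P ⟶ B) => φ ≫ g)

/-- cochain complexes of left `R`-modules -/
abbrev Cplx := CochainComplex (ModuleCat.{u} R) ℤ

variable {R}

/-- the inclusion of `Ker (d^n)` into `X^n` -/
def kerIncl (X : Cplx R) (n : ℤ) :
    ModuleCat.of R (LinearMap.ker (X.d n (n+1)).hom) ⟶ X.X n :=
  ModuleCat.ofHom (LinearMap.ker (X.d n (n+1)).hom).subtype

/-- the corestriction `X^n ⟶ Ker (d^{n+1})` of the differential `d^n` -/
def kerCoretr (X : Cplx R) (n : ℤ) :
    X.X n ⟶ ModuleCat.of R (LinearMap.ker (X.d (n+1) (n+2)).hom) :=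
  ModuleCat.ofHom (LinearMap.codRestrict _ (X.d n (n+1)).hom (by
    intro c
    simp only [LinearMap.mem_ker]
    have h' := congrArg (fun (f : X.X n ⟶ X.X (n+2)) => f.hom c) (X.d_comp_d n (n+1) (n+2))
    simpa only [ModuleCat.hom_comp, LinearMap.comp_apply, ModuleCat.hom_zero,
      LinearMap.zero_apply] using h'))

variable (R)

/-- A complex `X` is *pure-acyclic* (pure-exact) if, for every `n`, the short
(exact) sequence `0 → Ker d^n → X^n → Ker d^{n+1} → 0` is pure-exact.
(In particular this includes the exactness of `X`.) -/
def PureAcyclic (X : Cplx R) : Prop :=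
  ∀ n : ℤ, IsPureSES R (kerIncl X n) (kerCoretr X n)

/-- a complex is acyclic (exact) if it is exact at every degree -/
def AcyclicC (X : Cplx R) : Prop := ∀ n : ℤ, X.ExactAt n

/-- bounded above complexes -/
def IsBddAbove (X : Cplx R) : Prop := ∃ b : ℤ, ∀ n : ℤ, b < n → IsZero (X.X n)

/-- bounded complexes -/
def IsBdd (X : Cplx R) : Prop := ∃ a b : ℤ, ∀ n : ℤ, (n < a ∨ b < n) → IsZero (X.X n)

/-- complexes all of whose components are pure-projective -/
def DegreewisePP (X : Cplx R) : Prop := ∀ n : ℤ, PureProjective R (X.X n)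

/-- `H^i (Hom_R(P, X)) = 0`, expressed concretely: every `i`-cocycle of the complex
`Hom_R(P,X)` of abelian groups is an `i`-coboundary. -/
def homExactAt (P : ModuleCat.{u} R) (X : Cplx R) (i : ℤ) : Prop :=
  ∀ (φ : P ⟶ X.X i), φ ≫ X.d i (i+1) = 0 →
    ∃ ψ : P ⟶ X.X (i-1), ψ ≫ X.d (i-1) i = φ

/-- The defining property of objects of `K^{-,ppb}(PP)`: bounded above complexes `X` of
pure-projective modules such that there exists `n` with `H^i Hom_R(P,X) = 0` for all
`i ≤ n` and all pure-projective modules `P`. -/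
def MinusPPB (X : Cplx R) : Prop :=
  IsBddAbove R X ∧ DegreewisePP R X ∧
    ∃ n : ℤ, ∀ i ≤ n, ∀ P : ModuleCat.{u} R, PureProjective R P → homExactAt R P X i

/-!
Downward induction from the top degree: if `X^{n+1} ⟶ Z^{n+2}` splits, then `Z^{n+1}` is a
direct summand of the pure-projective module `X^{n+1}`, hence pure-projective itself, so the
pure epimorphism `X^n ⟶ Z^{n+1}` splits. Sections `σ_n` of all the maps `X^n ⟶ Z^{n+1}` give
the contracting homotopy `σ_n ∘ (1 - σ_{n+1} ∘ d)`.
-/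

section

variable {R}

namespace IsPureSES

variable {A B C : ModuleCat.{u} R} {f : A ⟶ B} {g : B ⟶ C}

lemma comp_eq_zero (h : IsPureSES R f g) : f ≫ g = 0 :=
  ModuleCat.hom_ext (LinearMap.ext h.2.1.apply_apply_eq_zero)

lemma injective_comp (h : IsPureSES R f g) (Q : ModuleCat.{u} R) :
    Function.Injective (fun (φ : Q ⟶ A) => φ ≫ f) :=
  have : Mono f := (ModuleCat.mono_iff_injective f).mpr h.1
  fun _ _ => (cancel_mono f).mp

lemma exact_comp (h : IsPureSES R f g) (Q : ModuleCat.{u} R) :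
    Function.Exact (fun (φ : Q ⟶ A) => φ ≫ f) (fun (φ : Q ⟶ B) => φ ≫ g) := by
  have : Mono f := (ModuleCat.mono_iff_injective f).mpr h.1
  have hS : (ShortComplex.mk f g h.comp_eq_zero).Exact := ModuleCat.shortComplex_exact _ h.2.1
  intro φ
  constructor
  · intro hφ
    exact ⟨hS.lift φ hφ, hS.lift_f φ hφ⟩
  · rintro ⟨ψ, rfl⟩
    simp [h.comp_eq_zero]

end IsPureSES

lemma pureProjective_iff_surjective (P : ModuleCat.{u} R) :
    PureProjective R P ↔ ∀ ⦃A B C : ModuleCat.{u} R⦄ (f : A ⟶ B) (g : B ⟶ C),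
      IsPureSES R f g → Function.Surjective (fun (φ : P ⟶ B) => φ ≫ g) :=
  ⟨fun hP _ _ _ f g h => (hP f g h).2.2,
    fun hP _ _ _ f g h => ⟨h.injective_comp P, h.exact_comp P, hP f g h⟩⟩

lemma PureProjective.of_retract {A B : ModuleCat.{u} R} (e : Retract A B)
    (hB : PureProjective R B) : PureProjective R A := by
  refine (pureProjective_iff_surjective A).mpr fun _ _ _ f g h φ => ?_
  obtain ⟨ψ, hψ⟩ := (hB f g h).2.2 (e.r ≫ φ)
  exact ⟨e.i ≫ ψ, by simp only [Category.assoc, hψ, e.retract_assoc]⟩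

lemma apply_section_apply {B K : ModuleCat.{u} R} (p : B ⟶ K) [IsSplitEpi p] (k : K) :
    p (section_ p k) = k :=
  congr($(IsSplitEpi.id p) k)

noncomputable def retractKer {B K : ModuleCat.{u} R} {C : Type*} [AddCommGroup C] [Module R C]
    {p : B ⟶ K} [IsSplitEpi p] {d : B →ₗ[R] C} (hpd : LinearMap.ker p.hom = LinearMap.ker d) :
    Retract (ModuleCat.of R (LinearMap.ker d)) B where
  i := ModuleCat.ofHom (LinearMap.ker d).subtype
  r := ModuleCat.ofHom <| LinearMap.codRestrict _ (LinearMap.id - (section_ p).hom ∘ₗ p.hom)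
    fun x => by
      rw [← hpd, LinearMap.mem_ker]
      simp [apply_section_apply]
  retract := by
    ext z
    have hz : p z.1 = 0 := by rw [← LinearMap.mem_ker, hpd]; exact z.2
    simp [hz]

lemma retractKer_r_apply {B K : ModuleCat.{u} R} {C : Type*} [AddCommGroup C] [Module R C]
    {p : B ⟶ K} [IsSplitEpi p] {d : B →ₗ[R] C} (hpd : LinearMap.ker p.hom = LinearMap.ker d)
    (x : B) : ((retractKer hpd).r x : B) = x - section_ p (p x) :=
  rfl

lemma ker_kerCoretr (X : Cplx R) {n j : ℤ} (h : n + 1 = j) :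
    LinearMap.ker (kerCoretr X n).hom = LinearMap.ker (X.d n j).hom := by
  subst h
  exact LinearMap.ker_codRestrict _ _ _

lemma isSplitEpi_kerCoretr_of_isZero (X : Cplx R) (n : ℤ) (h : IsZero (X.X (n+1))) :
    IsSplitEpi (kerCoretr X n) := by
  have := ModuleCat.subsingleton_of_isZero h
  exact IsSplitEpi.mk' ⟨0, (ModuleCat.isZero_of_subsingleton _).eq_of_tgt _ _⟩

lemma isSplitEpi_kerCoretr_of_pureProjective {X : Cplx R} {n : ℤ}
    (hpure : IsPureSES R (kerIncl X n) (kerCoretr X n)) (hpp : PureProjective R (X.X (n+1)))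
    [IsSplitEpi (kerCoretr X (n+1))] : IsSplitEpi (kerCoretr X n) := by
  have hZ := hpp.of_retract (retractKer (ker_kerCoretr X (show n + 1 + 1 = n + 2 by ring)))
  obtain ⟨σ, hσ⟩ := (hZ _ _ hpure).2.2 (𝟙 _)
  exact IsSplitEpi.mk' ⟨σ, hσ⟩

lemma isSplitEpi_kerCoretr {X : Cplx R} (hba : IsBddAbove R X) (hpp : DegreewisePP R X)
    (hpac : PureAcyclic R X) (n : ℤ) : IsSplitEpi (kerCoretr X n) := by
  obtain ⟨b, hb⟩ := hba
  have above : ∀ n, b ≤ n → IsSplitEpi (kerCoretr X n) := fun n hn =>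
    isSplitEpi_kerCoretr_of_isZero X n (hb _ (by omega))
  rcases le_total b n with hn | hn
  · exact above n hn
  · induction n, hn using Int.leInductionDown with
    | base => exact above b le_rfl
    | pred n _ ih =>
      have : IsSplitEpi (kerCoretr X (n - 1 + 1)) := by rwa [sub_add_cancel]
      exact isSplitEpi_kerCoretr_of_pureProjective (hpac (n - 1)) (hpp _)

section Contraction

variable {X : Cplx R} [∀ n, IsSplitEpi (kerCoretr X n)]

noncomputable def contractingMap (n : ℤ) : X.X (n+1) ⟶ X.X n :=
  (retractKer (ker_kerCoretr X (show n + 1 + 1 = n + 2 by ring))).r ≫ section_ (kerCoretr X n)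

lemma contractingMap_d_apply (n : ℤ) (x : X.X (n+1)) :
    contractingMap (n+1) (X.d (n+1) (n+1+1) x) =
      section_ (kerCoretr X (n+1)) (kerCoretr X (n+1) x) := by
  have hdd : kerCoretr X (n+1+1) (X.d (n+1) (n+1+1) x) = 0 :=
    Subtype.ext congr($(X.d_comp_d (n+1) (n+1+1) (n+1+1+1)) x)
  change section_ (kerCoretr X (n+1)) ((retractKer _).r _) = _
  congr 1
  ext
  rw [retractKer_r_apply, hdd, map_zero, sub_zero]
  rfl

lemma d_contractingMap_apply (n : ℤ) (x : X.X (n+1)) :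
    X.d n (n+1) (contractingMap n x) = x - section_ (kerCoretr X (n+1)) (kerCoretr X (n+1) x) :=
  calc X.d n (n+1) (contractingMap n x)
      = (kerCoretr X n (section_ (kerCoretr X n) ((retractKer _).r x)) : X.X (n+1)) := rfl
    _ = x - section_ (kerCoretr X (n+1)) (kerCoretr X (n+1) x) := by
      rw [apply_section_apply, retractKer_r_apply]

noncomputable def homotopyIdZeroOfIsSplitEpi : Homotopy (𝟙 X) 0 :=
  let h : ∀ i j, (ComplexShape.up ℤ).Rel j i → (X.X i ⟶ X.X j) := fun _ j hij =>
    eqToHom (congrArg X.X (show j + 1 = _ from hij).symm) ≫ contractingMap j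
  (Homotopy.ofEq (by
    ext k : 2
    obtain ⟨n, rfl⟩ : ∃ n, k = n + 1 := ⟨k - 1, by ring⟩
    rw [Homotopy.nullHomotopicMap'_f (rfl : n + 1 = n + 1) (rfl : n + 1 + 1 = n + 1 + 1)]
    ext x
    simp [h, contractingMap_d_apply, d_contractingMap_apply])).trans (Homotopy.nullHomotopy' h)

end Contraction

end

/-- **Statement 4** (Lemma 3.3). A bounded above complex of pure-projective modules
which is pure-exact is contractible, i.e. it is zero in the homotopy category `K(R)`. -/
theorem pureAcyclic_bddAbove_pureProjective_contractible (P : Cplx R)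
    (hba : IsBddAbove R P) (hpp : DegreewisePP R P) (hpac : PureAcyclic R P) :
    Nonempty (Homotopy (𝟙 P) 0) ∧
      IsZero ((HomotopyCategory.quotient (ModuleCat.{u} R) (ComplexShape.up ℤ)).obj P) := by
  have := isSplitEpi_kerCoretr hba hpp hpac
  have htp : Homotopy (𝟙 P) 0 := homotopyIdZeroOfIsSplitEpi
  exact ⟨⟨htp⟩, (HomotopyCategory.isZero_quotient_obj_iff P).mpr ⟨htp⟩⟩

end Paper
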